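/- arXiv:2209.05763 — 3 statements merged into one kernel-verified Lean document; each statement's English description precedes it below -/
import Mathlib

section
/- Let 1 → N → G → U → 1 be a short exact sequence of linear algebraic groups over an algebraically closed field of characteristic zero, with U isomorphic to the additive group G_a. Then the sequence splits: there is a one-dimensional unipotent subgroup of G mapping isomorphically onto U. -/
/-!
Pick `g ∈ G` with `ρ g = 1` and write `g = D (1 + N)` with `D` semisimple, `N` nilpotent and
`D N = N D` (Jordan–Chevalley). The truncated binomial series gives a one-parameter subgroup
`s a = (1 + N) ^ a` with polynomial entries, and `g ^ m = D ^ m s m`. The entries of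
`M a m = D ^ m s a` are exponential polynomials `∑ p_ν(a) ν ^ m`, and since the sequences
`m ↦ m ^ j ν ^ m` are linearly independent, such a function vanishing on the diagonal `a = m`
vanishes everywhere. Applied to the equations of `G` this gives `s a = M a 0 ∈ G`; applied to
`P - det ^ e * a`, where `ρ = P / det ^ e`, it gives `ρ (s a) = a`.
-/

open Matrix MvPolynomial

/-- A subgroup of `GL n k` is Zariski closed if membership (among invertible matrices)
is cut out by polynomial equations in the matrix entries. -/
def IsZariskiClosedSubgroup {k : Type*} [CommRing k] {n : ℕ}
    (G : Subgroup (GL (Fin n) k)) : Prop :=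
  ∃ S : Set (MvPolynomial (Fin n × Fin n) k),
    ∀ M : GL (Fin n) k, M ∈ G ↔
      ∀ P ∈ S, MvPolynomial.eval (fun ij => (M : Matrix (Fin n) (Fin n) k) ij.1 ij.2) P = 0

/-- A function on a subgroup of `GL n k` is regular if it is given by a polynomial in the
matrix entries divided by a power of the determinant. -/
def IsRegularFunction {k : Type*} [Field k] {n : ℕ}
    (G : Subgroup (GL (Fin n) k)) (f : G → k) : Prop :=
  ∃ (m : ℕ) (P : MvPolynomial (Fin n × Fin n) k),
    ∀ g : G, f g =
      ((Matrix.det ((g : GL (Fin n) k) : Matrix (Fin n) (Fin n) k))⁻¹) ^ m *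
        MvPolynomial.eval
          (fun ij => ((g : GL (Fin n) k) : Matrix (Fin n) (Fin n) k) ij.1 ij.2) P

open Polynomial

namespace Polynomial

variable {k : Type*} [Field k]

theorem eq_zero_of_C_mul_taylor_eq {μ ν : k} (hμν : μ ≠ ν) {p : k[X]}
    (h : C μ * taylor 1 p = C ν * p) : p = 0 := by
  have hlc := congrArg (coeff · p.natDegree) h
  simp only [coeff_C_mul, coeff_taylor_natDegree] at hlc
  exact leadingCoeff_eq_zero.mp
    ((mul_eq_mul_right_iff.mp hlc).resolve_left hμν)

theorem degree_taylor_sub_lt {p : k[X]} (hp : p ≠ 0) (r : k) :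
    (taylor r p - p).degree < p.degree := by
  simpa [degree_taylor] using degree_sub_lt_left (degree_taylor p r)
    ((taylor_eq_zero r p).not.mpr hp) (leadingCoeff_taylor r p)

variable [CharZero k]

theorem eq_zero_of_forall_eval_natCast_eq_zero {p : k[X]} (h : ∀ m : ℕ, p.eval (m : k) = 0) :
    p = 0 :=
  eq_zero_of_infinite_isRoot p <| (Set.infinite_range_of_injective Nat.cast_injective).mono <| by
    rintro _ ⟨m, rfl⟩; exact h m

/-- Linear independence of the sequences `m ↦ m ^ j * ν ^ m`, `ν ∈ kˣ`. -/
theorem eq_zero_of_forall_sum_eval_mul_pow_eq_zero (s : Finset kˣ) (q : kˣ → k[X])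
    (h : ∀ m : ℕ, ∑ ν ∈ s, (q ν).eval (m : k) * (ν : k) ^ m = 0) : ∀ ν ∈ s, q ν = 0 := by
  classical
  induction s using Finset.induction_on generalizing q with
  | empty => simp
  | insert μ s hμ ih =>
    induction hd : (q μ).degree using WellFoundedLT.induction generalizing q with
    | _ d ihd =>
    by_cases hqμ : q μ = 0
    · have hs := ih q fun m => by simpa [Finset.sum_insert hμ, hqμ] using h m
      simpa [hqμ] using hs
    -- the difference operator `F ↦ F(m + 1) - μ F(m)` lowers the degree of the `μ`-coefficient
    set q' : kˣ → k[X] := fun ν => C (ν : k) * taylor 1 (q ν) - C (μ : k) * q ν with hq'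
    have h' : ∀ m : ℕ, ∑ ν ∈ insert μ s, (q' ν).eval (m : k) * (ν : k) ^ m = 0 := fun m => by
      have := congrArg₂ (· - (μ : k) * ·) (h (m + 1)) (h m)
      simp only [Finset.mul_sum, ← Finset.sum_sub_distrib, mul_zero, sub_zero] at this
      rw [← this]
      refine Finset.sum_congr rfl fun ν _ => ?_
      simp only [hq', eval_sub, eval_mul, eval_C, taylor_eval, Nat.cast_succ]
      ring
    have hdeg : (q' μ).degree < d := by
      rw [← hd, show q' μ = C (μ : k) * (taylor 1 (q μ) - q μ) by simp only [q', mul_sub],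
        degree_C_mul μ.ne_zero]
      exact degree_taylor_sub_lt hqμ 1
    have hq'0 := ihd _ hdeg q' h' rfl
    have hs : ∀ ν ∈ s, q ν = 0 := fun ν hν =>
      eq_zero_of_C_mul_taylor_eq (Units.val_injective.ne (ne_of_mem_of_not_mem hν hμ))
        (sub_eq_zero.mp (hq'0 ν (Finset.mem_insert_of_mem hν)))
    refine absurd (eq_zero_of_forall_eval_natCast_eq_zero fun m => ?_) hqμ
    have := h m
    rw [Finset.sum_insert hμ, Finset.sum_eq_zero fun ν hν => by simp [hs ν hν], add_zero] at this
    exact (mul_eq_zero.mp this).resolve_right (pow_ne_zero _ μ.ne_zero)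

end Polynomial

section ExpPoly

variable (k : Type*) [Field k]

/-- Evaluation of `∑ p_ν • ν ∈ k[X][kˣ]` as the function `(a, m) ↦ ∑ p_ν(a) ν ^ m`. -/
noncomputable def expPolyEval : MonoidAlgebra k[X] kˣ →+* (k → ℕ → k) :=
  RingHom.pi fun a => RingHom.pi fun m =>
    MonoidAlgebra.liftNCRingHom (evalRingHom a) ((powMonoidHom m).comp (Units.coeHom k))
      fun _ _ => .all _ _

noncomputable def expPolySubring : Subring (k → ℕ → k) := (expPolyEval k).range

variable {k}

@[simp]
theorem expPolyEval_single (ν : kˣ) (p : k[X]) (a : k) (m : ℕ) :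
    expPolyEval k (MonoidAlgebra.single ν p) a m = p.eval a * (ν : k) ^ m := by
  simp [expPolyEval]

theorem expPolyEval_apply (x : MonoidAlgebra k[X] kˣ) (a : k) (m : ℕ) :
    expPolyEval k x a m = ∑ ν ∈ x.coeff.support, (x.coeff ν).eval a * (ν : k) ^ m := by
  conv_lhs => rw [← x.sum_coeff_single]
  simp [Finsupp.sum]

theorem polynomial_eval_mem_expPolySubring (p : k[X]) :
    (fun a _ => p.eval a) ∈ expPolySubring k :=
  ⟨MonoidAlgebra.single 1 p, by ext; simp⟩

theorem const_mem_expPolySubring (c : k) : (fun _ _ => c) ∈ expPolySubring k := by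
  simpa using polynomial_eval_mem_expPolySubring (C c)

theorem pow_mem_expPolySubring (ν : kˣ) : (fun _ m => (ν : k) ^ m) ∈ expPolySubring k :=
  ⟨MonoidAlgebra.single ν 1, by ext; simp⟩

theorem mvPolynomial_eval_mem_expPolySubring {σ : Type*} (P : MvPolynomial σ k)
    {E : σ → k → ℕ → k} (hE : ∀ i, E i ∈ expPolySubring k) :
    (fun a m => MvPolynomial.eval (fun i => E i a m) P) ∈ expPolySubring k := by
  induction P using MvPolynomial.induction_on with
  | C c => simpa using const_mem_expPolySubring c
  | add p q hp hq => simp only [map_add]; exact add_mem hp hq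
  | mul_X p i hp => simp only [map_mul, MvPolynomial.eval_X]; exact mul_mem hp (hE i)

theorem Matrix.mul_apply_mem_expPolySubring {ι : Type*} [Fintype ι] {A B : k → ℕ → Matrix ι ι k}
    (hA : ∀ i j, (fun a m => A a m i j) ∈ expPolySubring k)
    (hB : ∀ i j, (fun a m => B a m i j) ∈ expPolySubring k) (i j : ι) :
    (fun a m => (A a m * B a m) i j) ∈ expPolySubring k := by
  convert sum_mem (t := Finset.univ) fun l _ => mul_mem (hA i l) (hB l j) using 1
  ext a m
  simp [Matrix.mul_apply]

variable [CharZero k]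

theorem eq_zero_of_mem_expPolySubring {F : k → ℕ → k} (hF : F ∈ expPolySubring k)
    (h : ∀ m : ℕ, F m m = 0) : F = 0 := by
  obtain ⟨x, rfl⟩ := hF
  suffices x = 0 by simp [this]
  have hx := eq_zero_of_forall_sum_eval_mul_pow_eq_zero x.coeff.support x.coeff fun m => by
    rw [← expPolyEval_apply]; exact h m
  refine MonoidAlgebra.ext (Finsupp.ext fun ν => ?_)
  by_contra hν
  exact hν (hx ν (Finsupp.mem_support_iff.mpr hν))

end ExpPoly

section BinomialPow

open PowerSeries

variable {R A : Type*} [CommRing R] [Ring A] [Algebra R A] {N : A} {K : ℕ}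

theorem aeval_trunc_coe_of_pow_eq_zero (hN : N ^ K = 0) (p : R[X]) :
    aeval N (trunc K (p : PowerSeries R)) = aeval N p := by
  obtain ⟨q, hq⟩ : Polynomial.X ^ K ∣ trunc K (p : PowerSeries R) - p :=
    Polynomial.X_pow_dvd_iff.mpr fun d hd => by simp [coeff_trunc, hd]
  rw [← sub_eq_zero, ← map_sub, hq, map_mul, map_pow, Polynomial.aeval_X, hN, zero_mul]

variable [BinomialRing R]

/-- `a ↦ (1 + N) ^ a` for nilpotent `N`. -/
noncomputable def binomialPow (hN : N ^ K = 0) : Multiplicative R →* A where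
  toFun a := aeval N (trunc K (binomialSeries R a.toAdd))
  map_one' := by simpa using aeval_trunc_coe_of_pow_eq_zero hN 1
  map_mul' a b := by
    rw [toAdd_mul, binomialSeries_add, ← trunc_trunc_mul_trunc, ← Polynomial.coe_mul,
      aeval_trunc_coe_of_pow_eq_zero hN, map_mul]

theorem binomialPow_ofAdd_natCast (hN : N ^ K = 0) (m : ℕ) :
    binomialPow hN (.ofAdd (m : R)) = (1 + N) ^ m := by
  have : binomialSeries R (m : R) = ((1 + Polynomial.X) ^ m : R[X]) := by simp
  simp only [binomialPow, MonoidHom.coe_mk, OneHom.coe_mk, toAdd_ofAdd, this,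
    aeval_trunc_coe_of_pow_eq_zero hN]
  simp

theorem binomialPow_ofAdd_eq_sum (hN : N ^ K = 0) (a : R) :
    binomialPow hN (.ofAdd a) = ∑ j ∈ Finset.range K, Ring.choose a j • N ^ j := by
  simp [binomialPow, Polynomial.aeval_def, eval₂_trunc_eq_sum_range, Algebra.smul_def]

end BinomialPow

theorem Ring.choose_eq_eval {k : Type*} [Field k] [CharZero k] (a : k) (j : ℕ) :
    Ring.choose a j = ((j.factorial : k)⁻¹ • descPochhammer k j).eval a := by
  rw [Ring.choose_eq_smul, ← aeval_eq_smeval, Polynomial.aeval_def, ← Polynomial.eval_map,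
    descPochhammer_map, eval_smul]

theorem exists_eval_eq_binomialPow_apply {k ι : Type*} [Field k] [CharZero k] [Fintype ι]
    [DecidableEq ι] {N : Matrix ι ι k} {K : ℕ} (hN : N ^ K = 0) :
    ∃ Q : ι → ι → k[X], ∀ a i j, binomialPow hN (.ofAdd a) i j = (Q i j).eval a := by
  refine ⟨fun i j => ∑ l ∈ Finset.range K,
    (l.factorial : k)⁻¹ • descPochhammer k l * Polynomial.C ((N ^ l) i j), fun a i j => ?_⟩
  simp [binomialPow_ofAdd_eq_sum, Matrix.sum_apply, eval_finsetSum, Ring.choose_eq_eval, mul_assoc]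

section Semisimple

variable {k : Type*} [Field k]

theorem Module.End.apply_pow_mem_expPolySubring {V : Type*} [AddCommGroup V] [Module k V]
    {f : Module.End k V} (hf : ⨆ μ, f.eigenspace μ = ⊤) (hinj : Function.Injective f)
    (φ : V →ₗ[k] k) (x : V) : (fun _ m => φ ((f ^ m) x)) ∈ expPolySubring k := by
  have heigen : ∀ μ, ∀ y ∈ f.eigenspace μ, (fun _ m => φ ((f ^ m) y)) ∈ expPolySubring k := by
    intro μ y hy
    have hpow : ∀ m : ℕ, (f ^ m) y = μ ^ m • y := fun m => by
      induction m with
      | zero => simp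
      | succ m ih => rw [pow_succ, Module.End.mul_apply, mem_eigenspace_iff.mp hy, map_smul, ih,
          smul_smul, pow_succ']
    by_cases hμ : μ = 0
    · have hy0 : y = 0 := hinj (by rw [mem_eigenspace_iff.mp hy, hμ, zero_smul, map_zero])
      simpa [hy0] using const_mem_expPolySubring 0
    · simp only [hpow, map_smul, smul_eq_mul]
      exact mul_mem (pow_mem_expPolySubring (Units.mk0 μ hμ)) (const_mem_expPolySubring (φ y))
  refine Submodule.iSup_induction _ (motive := fun x => (fun _ m => φ ((f ^ m) x)) ∈ _)
    (hf ▸ Submodule.mem_top) heigen (by simpa using const_mem_expPolySubring 0) fun y z hy hz => ?_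
  simp only [map_add]
  exact add_mem hy hz

variable {ι : Type*} [Fintype ι] [DecidableEq ι]

theorem Matrix.GeneralLinearGroup.pow_apply_mem_expPolySubring {D : GL ι k}
    (hD : ⨆ μ, Module.End.eigenspace (Matrix.toLin' (D : Matrix ι ι k)) μ = ⊤) (i j : ι) :
    (fun _ m => ((D ^ m : GL ι k) : Matrix ι ι k) i j) ∈ expPolySubring k := by
  have hinj : Function.Injective (Matrix.toLin' (D : Matrix ι ι k)) :=
    ((Module.End.isUnit_iff _).mp ((D.isUnit).map Matrix.toLinAlgEquiv')).injective
  simpa [← Matrix.toLin'_pow, Matrix.mulVec_single_one] using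
    Module.End.apply_pow_mem_expPolySubring hD hinj (LinearMap.proj i) (Pi.single j 1)

theorem Matrix.GeneralLinearGroup.exists_isSemisimple_mul_one_add_isNilpotent [IsAlgClosed k]
    (g : GL ι k) :
    ∃ (D : GL ι k) (N : Matrix ι ι k), IsNilpotent N ∧ Commute (D : Matrix ι ι k) N ∧
      (g : Matrix ι ι k) = D * (1 + N) ∧
        Module.End.IsSemisimple (Matrix.toLin' (D : Matrix ι ι k)) := by
  obtain ⟨n, hn, s, hs, hnil, hss, hg⟩ :=
    Module.End.exists_isNilpotent_isSemisimple (f := Matrix.toLin' (g : Matrix ι ι k))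
  let e := (Matrix.toLinAlgEquiv' (R := k) (n := ι)).symm
  have he : ∀ M, e (Matrix.toLin' M) = M := Matrix.toLinAlgEquiv'.symm_apply_apply
  have hg' : (g : Matrix ι ι k) = e n + e s := by rw [← he g, hg, map_add]
  have hgN : Commute (g : Matrix ι ι k) (e n) :=
    he (g : Matrix ι ι k) ▸ (Algebra.commute_of_mem_adjoin_self hn).map e
  have hNS : Commute (e n) (e s) :=
    (Algebra.commute_of_mem_adjoin_singleton_of_commute hs
      (Algebra.commute_of_mem_adjoin_self hn).symm).map e
  have hS : IsUnit (e s) := by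
    simpa [hg'] using (hnil.map e).neg.isUnit_add_left_of_commute g.isUnit hgN.symm.neg_left
  set D := hS.unit
  have hDinv : Commute (↑D⁻¹ : Matrix ι ι k) (e n) := hNS.symm.units_inv_left
  refine ⟨D, ((D⁻¹ : GL ι k) : Matrix ι ι k) * e n, hDinv.isNilpotent_mul_left (hnil.map e),
    ?_, ?_, ?_⟩
  · exact (Commute.refl _).units_inv_right.mul_right (hS.unit_spec ▸ hNS.symm)
  · rw [mul_add, mul_one, ← mul_assoc, D.mul_inv, one_mul, hg', add_comm]; rfl
  · exact (e.symm_apply_apply s).symm ▸ hss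

end Semisimple

section ZariskiClosed

variable {k : Type*} [Field k] {n : ℕ}

theorem mvPolynomial_eval_entries_mem_expPolySubring {M : k → ℕ → Matrix (Fin n) (Fin n) k}
    (hM : ∀ i j, (fun a m => M a m i j) ∈ expPolySubring k) (P : MvPolynomial (Fin n × Fin n) k) :
    (fun a m => MvPolynomial.eval (fun ij => M a m ij.1 ij.2) P) ∈ expPolySubring k :=
  mvPolynomial_eval_mem_expPolySubring P fun ij => hM ij.1 ij.2

variable [CharZero k]

theorem IsZariskiClosedSubgroup.mem_of_forall_diagonal_mem {G : Subgroup (GL (Fin n) k)}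
    (hG : IsZariskiClosedSubgroup G) {M : k → ℕ → GL (Fin n) k}
    (hM : ∀ i j, (fun a m => (M a m : Matrix (Fin n) (Fin n) k) i j) ∈ expPolySubring k)
    (hdiag : ∀ m : ℕ, M m m ∈ G) (a : k) (m : ℕ) : M a m ∈ G := by
  obtain ⟨S, hS⟩ := hG
  refine (hS _).mpr fun P hP => ?_
  have := eq_zero_of_mem_expPolySubring (mvPolynomial_eval_entries_mem_expPolySubring hM P)
    fun m => (hS _).mp (hdiag m) P hP
  exact congrFun (congrFun this a) m

theorem IsRegularFunction.eq_of_forall_diagonal {G : Subgroup (GL (Fin n) k)} {f : G → k}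
    (hf : IsRegularFunction G f) {M : k → ℕ → GL (Fin n) k}
    (hM : ∀ i j, (fun a m => (M a m : Matrix (Fin n) (Fin n) k) i j) ∈ expPolySubring k)
    (hMG : ∀ a m, M a m ∈ G) (hdiag : ∀ m : ℕ, f ⟨M m m, hMG m m⟩ = m) (a : k) (m : ℕ) :
    f ⟨M a m, hMG a m⟩ = a := by
  obtain ⟨e, P, hP⟩ := hf
  have hP' : ∀ g : G,
      MvPolynomial.eval (fun ij => ((g : GL (Fin n) k) : Matrix (Fin n) (Fin n) k) ij.1 ij.2) P =
        ((g : GL (Fin n) k) : Matrix (Fin n) (Fin n) k).det ^ e * f g := fun g => by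
    rw [hP g, ← mul_assoc, inv_pow,
      mul_inv_cancel₀ (pow_ne_zero _ (GeneralLinearGroup.det_ne_zero _)), one_mul]
  have hdet : ∀ A : Matrix (Fin n) (Fin n) k,
      MvPolynomial.eval (fun ij => A ij.1 ij.2) (mvPolynomialX (Fin n) (Fin n) k).det = A.det :=
    fun A => eval_det_mvPolynomialX (Fin n) k _
  -- `P - det ^ e * a` is an exponential polynomial along `M`, vanishing on the diagonal
  have hH := eq_zero_of_mem_expPolySubring
    (sub_mem (mvPolynomial_eval_entries_mem_expPolySubring hM P)
      (mul_mem (pow_mem (mvPolynomial_eval_entries_mem_expPolySubring hM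
        (mvPolynomialX (Fin n) (Fin n) k).det) e)
          (polynomial_eval_mem_expPolySubring Polynomial.X)))
    fun m => by simpa [hdet, hdiag, sub_eq_zero] using hP' ⟨M m m, hMG m m⟩
  have := congrFun (congrFun hH a) m
  simp only [hdet, Polynomial.eval_X, Pi.zero_apply, Pi.sub_apply, Pi.mul_apply, Pi.pow_apply,
    sub_eq_zero] at this
  exact mul_left_cancel₀ (pow_ne_zero _ (GeneralLinearGroup.det_ne_zero _))
    ((hP' ⟨M a m, hMG a m⟩).symm.trans this)

end ZariskiClosed

/-- Let `1 → N → G → U → 1` be a short exact sequence of linear algebraic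
groups over an algebraically closed field `k` of characteristic zero, with `U ≅ G_a`
(the additive group `(k,+)`): i.e. `G` is a Zariski closed subgroup of some `GL n k` and
`ρ : G → G_a` is a surjective regular homomorphism (with kernel `N`). Then the sequence
splits: there is an algebraic one-parameter unipotent subgroup of `G`, i.e. a
homomorphism `s : G_a → G` with polynomial entries, such that `ρ ∘ s = id`. -/
theorem stmt4 {k : Type*} [Field k] [IsAlgClosed k] [CharZero k] {n : ℕ}
    (G : Subgroup (GL (Fin n) k)) (hG : IsZariskiClosedSubgroup G)
    (ρ : G →* Multiplicative k)
    (hρreg : IsRegularFunction G (fun g => Multiplicative.toAdd (ρ g)))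
    (hρsurj : Function.Surjective ρ) :
    ∃ s : k → GL (Fin n) k,
      (∀ a, s a ∈ G) ∧
      s 0 = 1 ∧
      (∀ a b, s (a + b) = s a * s b) ∧
      (∃ Q : Fin n → Fin n → Polynomial k,
        ∀ (a : k) (i j : Fin n), ((s a : GL (Fin n) k) : Matrix (Fin n) (Fin n) k) i j
          = (Q i j).eval a) ∧
      (∀ (a : k) (h : s a ∈ G), ρ ⟨s a, h⟩ = Multiplicative.ofAdd a) := by
  obtain ⟨g, hg⟩ := hρsurj (.ofAdd 1)
  obtain ⟨D, N, ⟨K, hK⟩, hDN, hgDN, hD⟩ :=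
    GeneralLinearGroup.exists_isSemisimple_mul_one_add_isNilpotent (g : GL (Fin n) k)
  obtain ⟨Q, hQ⟩ := exists_eval_eq_binomialPow_apply hK
  let s : Multiplicative k →* GL (Fin n) k := (binomialPow hK).toHomUnits
  let M : k → ℕ → GL (Fin n) k := fun a m => D ^ m * s (.ofAdd a)
  have hMdiag : ∀ m : ℕ, M m m = (g : GL (Fin n) k) ^ m := fun m => Units.ext <| by
    simp [M, s, binomialPow_ofAdd_natCast, hgDN, (Commute.one_right _).add_right hDN |>.mul_pow]
  have hM : ∀ i j, (fun a m => (M a m : Matrix (Fin n) (Fin n) k) i j) ∈ expPolySubring k :=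
    Matrix.mul_apply_mem_expPolySubring (D.pow_apply_mem_expPolySubring hD.iSup_eigenspace_eq_top)
      fun i j => by simpa [s, hQ] using polynomial_eval_mem_expPolySubring (Q i j)
  have hMG := hG.mem_of_forall_diagonal_mem hM fun m => hMdiag m ▸ pow_mem g.2 m
  have hρM := hρreg.eq_of_forall_diagonal hM hMG fun m => by
    rw [show (⟨M m m, hMG m m⟩ : G) = g ^ m from Subtype.ext (hMdiag m), map_pow, hg]
    simp
  refine ⟨fun a => s (.ofAdd a), fun a => by simpa [M] using hMG a 0, by simp,
    fun a b => by simp [ofAdd_add], ⟨Q, hQ⟩, fun a h => ?_⟩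
  rw [← ofAdd_toAdd (ρ _)]
  congr 1
  simpa [M] using hρM a 0
end

section
/- There exist holomorphic functions σ_k (k ∈ ℤ) on ℂ, namely σ_k(z) = e^{2πiz}/(z−k), such that the σ_k have no common zero (they generate the trivial line bundle everywhere), yet the O(ℂ)-module generated by the σ_k is a proper subset of O(ℂ): every function in this module vanishes at all but finitely many integers, while e.g. the constant function 1 does not. -/
/-!
With `g z = e^{2πiz} - 1`, whose zeros are exactly the integers, all simple, `σ_k` is the
difference quotient `dslope g k`: it is entire, equals `g'(k) = 2πi` at `k`, and vanishes
exactly at the integers other than `k`. Hence at every point some `σ_k` is nonzero, while the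
functions vanishing at all but finitely many integers form an ideal of `ℂ → ℂ` containing every
`σ_k`, but not `1`.
-/

open Complex Filter

section EventuallyZeroIdeal

variable {α β R : Type*} [CommSemiring R]

def eventuallyZeroIdeal (l : Filter β) (φ : β → α) : Ideal (α → R) where
  carrier := {f | ∀ᶠ b in l, f (φ b) = 0}
  zero_mem' := Eventually.of_forall fun _ => rfl
  add_mem' {f g} hf hg := by
    filter_upwards [hf, hg] with b hfb hgb
    simp only [Pi.add_apply, hfb, hgb, add_zero]
  smul_mem' c f hf := by
    filter_upwards [hf] with b hfb
    simp only [smul_eq_mul, Pi.mul_apply, hfb, mul_zero]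

theorem mem_eventuallyZeroIdeal {l : Filter β} {φ : β → α} {f : α → R} :
    f ∈ eventuallyZeroIdeal l φ ↔ ∀ᶠ b in l, f (φ b) = 0 :=
  Iff.rfl

theorem one_notMem_eventuallyZeroIdeal [Nontrivial R] (l : Filter β) [l.NeBot] (φ : β → α) :
    (1 : α → R) ∉ eventuallyZeroIdeal l φ := fun h =>
  let ⟨_, hb⟩ := (mem_eventuallyZeroIdeal.1 h).exists
  one_ne_zero hb

end EventuallyZeroIdeal

theorem dslope_eq_zero_of_ne {𝕜 E : Type*} [NontriviallyNormedField 𝕜] [NormedAddCommGroup E]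
    [NormedSpace 𝕜 E] {f : 𝕜 → E} {a b : 𝕜} (ha : f a = 0) (hb : f b = 0) (hne : b ≠ a) :
    dslope f a b = 0 := by
  rw [dslope_of_ne f hne, slope, ha, hb, vsub_self, smul_zero]

noncomputable def expTwoPiISubOne (z : ℂ) : ℂ :=
  exp (2 * Real.pi * I * z) - 1

theorem expTwoPiISubOne_eq_zero_iff {z : ℂ} : expTwoPiISubOne z = 0 ↔ ∃ k : ℤ, z = k := by
  have hπ : (2 * Real.pi * I : ℂ) ≠ 0 := by simp [Real.pi_ne_zero, I_ne_zero]
  simp only [expTwoPiISubOne, sub_eq_zero, exp_eq_one_iff]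
  refine exists_congr fun k => ⟨fun h => ?_, fun h => by rw [h]; ring⟩
  exact mul_left_cancel₀ hπ (by linear_combination h)

theorem expTwoPiISubOne_intCast (k : ℤ) : expTwoPiISubOne k = 0 :=
  expTwoPiISubOne_eq_zero_iff.2 ⟨k, rfl⟩

theorem hasDerivAt_expTwoPiISubOne (z : ℂ) :
    HasDerivAt expTwoPiISubOne (exp (2 * Real.pi * I * z) * (2 * Real.pi * I)) z := by
  unfold expTwoPiISubOne
  simpa using (((hasDerivAt_id z).const_mul (2 * Real.pi * I)).cexp.sub_const 1)

theorem differentiable_expTwoPiISubOne : Differentiable ℂ expTwoPiISubOne :=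
  fun z => (hasDerivAt_expTwoPiISubOne z).differentiableAt

theorem deriv_expTwoPiISubOne_intCast (k : ℤ) :
    deriv expTwoPiISubOne k = 2 * Real.pi * I := by
  have hk : exp (2 * Real.pi * I * k) = 1 := by
    simpa [expTwoPiISubOne, sub_eq_zero] using expTwoPiISubOne_intCast k
  rw [(hasDerivAt_expTwoPiISubOne k).deriv, hk, one_mul]

theorem dslope_expTwoPiISubOne (k : ℤ) :
    dslope expTwoPiISubOne k = fun z =>
      if z = (k : ℂ) then 2 * Real.pi * I
      else (exp (2 * Real.pi * I * z) - 1) / (z - (k : ℂ)) := by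
  funext z
  split_ifs with h
  · rw [h, dslope_same, deriv_expTwoPiISubOne_intCast]
  · rw [dslope_of_ne _ h, slope_def_field, expTwoPiISubOne_intCast, sub_zero, expTwoPiISubOne]

theorem differentiable_dslope_expTwoPiISubOne (k : ℤ) :
    Differentiable ℂ (dslope expTwoPiISubOne k) := by
  rw [← differentiableOn_univ, differentiableOn_dslope Filter.univ_mem]
  exact differentiable_expTwoPiISubOne.differentiableOn

theorem exists_dslope_expTwoPiISubOne_ne_zero (z : ℂ) :
    ∃ k : ℤ, dslope expTwoPiISubOne k z ≠ 0 := by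
  by_cases hz : ∃ k : ℤ, z = k
  · obtain ⟨k, rfl⟩ := hz
    refine ⟨k, ?_⟩
    rw [dslope_same, deriv_expTwoPiISubOne_intCast]
    simp [Real.pi_ne_zero, I_ne_zero]
  · have hz0 : z ≠ ((0 : ℤ) : ℂ) := fun h => hz ⟨0, h⟩
    refine ⟨0, ?_⟩
    rw [dslope_of_ne _ hz0, slope_def_field, expTwoPiISubOne_intCast, sub_zero]
    exact div_ne_zero (mt expTwoPiISubOne_eq_zero_iff.1 hz) (sub_ne_zero.2 hz0)

theorem dslope_expTwoPiISubOne_mem_eventuallyZeroIdeal (k : ℤ) :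
    dslope expTwoPiISubOne k ∈ eventuallyZeroIdeal cofinite ((↑) : ℤ → ℂ) := by
  refine mem_eventuallyZeroIdeal.2 ((eventually_cofinite_ne k).mono fun m hm => ?_)
  exact dslope_eq_zero_of_ne (expTwoPiISubOne_intCast k) (expTwoPiISubOne_intCast m)
    (Int.cast_injective.ne hm)

/-- There exist entire functions `σ_k` (k ∈ ℤ), namely
`σ_k(z) = (e^{2πiz} − 1)/(z − k)` (with the removable singularity at `z = k` filled in),
which have no common zero, yet the `O(ℂ)`-module they generate is a proper subset of
`O(ℂ)`: every function in this module vanishes at all but finitely many integers, while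
the constant function `1` does not lie in the module. -/
theorem stmt17 :
    ∃ σ : ℤ → ℂ → ℂ,
      (∀ k, σ k = fun z =>
        if z = (k : ℂ) then 2 * Real.pi * I
        else (Complex.exp (2 * Real.pi * I * z) - 1) / (z - (k : ℂ))) ∧
      (∀ k, Differentiable ℂ (σ k)) ∧
      (∀ z : ℂ, ∃ k, σ k z ≠ 0) ∧
      (∀ f ∈ Submodule.span (ℂ → ℂ) (Set.range σ),
        {m : ℤ | f (m : ℂ) ≠ 0}.Finite) ∧
      (1 : ℂ → ℂ) ∉ Submodule.span (ℂ → ℂ) (Set.range σ) := by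
  have hspan : Submodule.span (ℂ → ℂ) (Set.range fun k : ℤ => dslope expTwoPiISubOne k) ≤
      eventuallyZeroIdeal cofinite ((↑) : ℤ → ℂ) :=
    Submodule.span_le.2 <| Set.range_subset_iff.2 dslope_expTwoPiISubOne_mem_eventuallyZeroIdeal
  exact ⟨fun k => dslope expTwoPiISubOne k, dslope_expTwoPiISubOne,
    differentiable_dslope_expTwoPiISubOne, exists_dslope_expTwoPiISubOne_ne_zero,
    fun f hf => eventually_cofinite.1 (hspan hf),
    fun h => one_notMem_eventuallyZeroIdeal cofinite _ (hspan h)⟩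
end

section
/- Let E → B be an algebraic vector bundle over a smooth affine variety B over a field of characteristic zero, and let μ : G_a × B → B be an algebraic action of the additive group on B. Assume the Bass–Quillen property: every vector bundle on 𝔸¹ × B is the pullback of a vector bundle on B along the projection. Then for every t ∈ G_a the pullback μ_t^*E is isomorphic to E as a vector bundle on B. -/
open CategoryTheory

/-- Let `B` be a smooth affine variety (an object of a category `C` of
varieties), `AB = 𝔸¹ × B`, with projection `p : AB ⟶ B`, and for each `t ∈ k = G_a` the
section `i t : B ⟶ AB`, `x ↦ (t, x)` (so `i t ≫ p = 𝟙 B`). Let `μ : AB ⟶ B` be an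
algebraic `G_a`-action on `B`, so that `μ_t = i t ≫ μ` and `i 0 ≫ μ = 𝟙 B`.
Vector bundles (isomorphism classes) form a presheaf `Bun` on `C` (pullback is
functorial). Assume the Bass–Quillen property: every bundle on `𝔸¹ × B` is the pullback
along `p` of a bundle on `B`. Then for every `t`, `μ_t^* E ≅ E` for every bundle `E`
on `B`. -/
theorem stmt18 {C : Type*} [Category C] (Bun : Cᵒᵖ ⥤ Type*)
    {k : Type*} [AddCommGroup k]
    (B AB : C) (p : AB ⟶ B) (i : k → (B ⟶ AB))
    (hi : ∀ t, i t ≫ p = 𝟙 B)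
    (μ : AB ⟶ B) (hμ0 : i 0 ≫ μ = 𝟙 B)
    (hBQ : ∀ Ebar : Bun.obj (Opposite.op AB),
      ∃ E₀ : Bun.obj (Opposite.op B), Ebar = Bun.map p.op E₀)
    (E : Bun.obj (Opposite.op B)) (t : k) :
    Bun.map (i t ≫ μ).op E = E := by
  obtain ⟨E₀, h⟩ := hBQ (Bun.map μ.op E)
  have key : ∀ s : k, Bun.map (i s ≫ μ).op E = E₀ := by
    intro s
    have : Bun.map (i s ≫ μ).op E = Bun.map (i s).op (Bun.map μ.op E) := by
      rw [op_comp, Bun.map_comp]; rfl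
    rw [this, h]
    have : Bun.map (i s).op (Bun.map p.op E₀) = Bun.map (i s ≫ p).op E₀ := by
      rw [op_comp, Bun.map_comp]; rfl
    rw [this, hi s]
    simp
  have h0 := key 0
  rw [hμ0] at h0
  simp at h0
  rw [key t, ← h0]
end
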